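/- Let N ≥ 2 and suppose for every finite Σ ⊂ Gr(d,n) with #Σ ≤ N and every s > 0 one has a bound ‖M_{Σ,{s}}‖_{L²(ℝⁿ)→L²(ℝⁿ)} ≤ A(N). Then for M = N^{1/(n−d)} and a suitable (2^{−18}M^{−1})-separated family of directions in a fixed copy of S^{n−d}, the maximal operator over scale-M plates of dimension d satisfies the lower bound A(N) ≳ N^{(n−d+1−p)/(p(n−d))} for all 1 < p < n−d+1; in particular for p = 2 < n−d+1, ‖M_{Σ,{s}}‖_{L²(ℝⁿ)} ≳ N^{(n−d−1)/(2(n−d))}. -/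

import Mathlib

open MeasureTheory Submodule ENNReal Set Metric

section Helpers
variable (n d : ℕ)

/-- Projection on the first `d` coordinates. -/
noncomputable def projE (hdn : d ≤ n) : EuclideanSpace ℝ (Fin n) → EuclideanSpace ℝ (Fin d) :=
  fun y => WithLp.toLp 2 (fun j => y (Fin.castLE hdn j))

/-- direction vector with slopes `z` -/
noncomputable def dirv (z : Fin n → ℝ) : EuclideanSpace ℝ (Fin n) :=
  WithLp.toLp 2 (fun i : Fin n => if (i : ℕ) + 1 = d then 1 else if d ≤ (i : ℕ) then z i else 0)

noncomputable def Bfam (z : Fin n → ℝ) : Fin d → EuclideanSpace ℝ (Fin n) :=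
  fun j => if (j : ℕ) + 1 < d then (WithLp.toLp 2 (fun i : Fin n => if (i : ℕ) = (j : ℕ) then 1 else 0)) else dirv n d z

noncomputable def phiMap (z : Fin n → ℝ) (v : EuclideanSpace ℝ (Fin d)) :
    EuclideanSpace ℝ (Fin n) := ∑ j : Fin d, v j • Bfam n d z j

variable {n d}

lemma projE_lipschitz (hdn : d ≤ n) : LipschitzWith 1 (projE n d hdn) := by
  refine LipschitzWith.of_dist_le_mul fun x y => ?_
  rw [NNReal.coe_one, one_mul, EuclideanSpace.dist_eq, EuclideanSpace.dist_eq]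
  apply Real.sqrt_le_sqrt
  calc ∑ j : Fin d, dist (projE n d hdn x j) (projE n d hdn y j) ^ 2
      = ∑ i ∈ Finset.univ.image (Fin.castLE hdn), dist (x i) (y i) ^ 2 := by
        rw [Finset.sum_image (fun a _ b _ h => Fin.castLE_injective hdn h)]; rfl
    _ ≤ ∑ i : Fin n, dist (x i) (y i) ^ 2 := by
        apply Finset.sum_le_sum_of_subset_of_nonneg (Finset.subset_univ _)
        intros; positivity

lemma sum_apply' (v : EuclideanSpace ℝ (Fin d)) (B : Fin d → EuclideanSpace ℝ (Fin n)) (i : Fin n) :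
    (∑ j : Fin d, v j • B j) i = ∑ j : Fin d, v j * B j i := by
  induction (Finset.univ : Finset (Fin d)) using Finset.induction with
  | empty => rfl
  | insert a s h ih => rw [Finset.sum_insert h, Finset.sum_insert h, ← ih]; rfl

lemma phiMap_castLE (hd : 1 ≤ d) (hdn : d ≤ n) (z : Fin n → ℝ) (v : EuclideanSpace ℝ (Fin d))
    (j : Fin d) : phiMap n d z v (Fin.castLE hdn j) = v j := by
  rw [phiMap, sum_apply']
  rw [Finset.sum_eq_single j]
  · by_cases h : (j : ℕ) + 1 < d
    · simp [Bfam, h]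
    · have hj : (j : ℕ) + 1 = d := Nat.le_antisymm j.2 (not_lt.1 h)
      simp [Bfam, h, dirv, hj, Fin.castLE]
  · intro j' _ hne
    by_cases h : (j' : ℕ) + 1 < d
    · simp only [Bfam, if_pos h, Fin.coe_castLE]
      rw [if_neg (show ¬((j : ℕ) = (j' : ℕ)) from fun hc => hne (Fin.ext hc).symm), mul_zero]
    · have hj' : (j' : ℕ) + 1 = d := Nat.le_antisymm j'.2 (not_lt.1 h)
      have hj : (j : ℕ) + 1 < d := by
        rcases Nat.lt_or_ge ((j : ℕ) + 1) d with h1 | h1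
        · exact h1
        · exact absurd (Fin.ext (by omega : (j' : ℕ) = (j : ℕ))) hne
      have h2 : ¬((j : ℕ) + 1 = d) := by omega
      have h3 : ¬(d ≤ (j : ℕ)) := by omega
      simp [Bfam, h, dirv, h2, h3]
  · simp

lemma phiMap_ge (hd : 1 ≤ d) (z : Fin n → ℝ) (v : EuclideanSpace ℝ (Fin d))
    (i : Fin n) (hi : d ≤ (i : ℕ)) : phiMap n d z v i = v ⟨d - 1, by omega⟩ * z i := by
  rw [phiMap, sum_apply']
  rw [Finset.sum_eq_single ⟨d - 1, by omega⟩]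
  · have h : ¬((⟨d - 1, by omega⟩ : Fin d) : ℕ) + 1 < d := by simp; omega
    have h1 : ¬((i : ℕ) + 1 = d) := by omega
    simp [Bfam, h, dirv, h1, hi]
  · intro j' _ hne
    by_cases h : (j' : ℕ) + 1 < d
    · have : ¬((i : ℕ) = (j' : ℕ)) := by omega
      simp [Bfam, h, this]
    · exact absurd (by ext; simp only [Fin.val_mk]; omega : j' = ⟨d - 1, by omega⟩) hne
  · simp

lemma Bfam_linearIndependent (hd : 1 ≤ d) (hdn : d ≤ n) (z : Fin n → ℝ) :
    LinearIndependent ℝ (Bfam n d z) := by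
  rw [Fintype.linearIndependent_iff]
  intro g hg j
  have := congrArg (fun w : EuclideanSpace ℝ (Fin n) => w (Fin.castLE hdn j)) hg
  simp only at this
  rw [show (∑ j : Fin d, g j • Bfam n d z j) = phiMap n d z (WithLp.toLp 2 g) from rfl] at this
  rw [phiMap_castLE hd hdn] at this
  simpa using this

lemma finrank_span_Bfam (hd : 1 ≤ d) (hdn : d ≤ n) (z : Fin n → ℝ) :
    Module.finrank ℝ (span ℝ (Set.range (Bfam n d z))) = d := by
  rw [finrank_span_eq_card (Bfam_linearIndependent hd hdn z), Fintype.card_fin]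

lemma phiMap_mem_span (z : Fin n → ℝ) (v : EuclideanSpace ℝ (Fin d)) :
    phiMap n d z v ∈ span ℝ (Set.range (Bfam n d z)) :=
  sum_mem fun j _ => smul_mem _ _ (subset_span ⟨j, rfl⟩)

lemma hausdorff_phiMap_lb (hd : 1 ≤ d) (hdn : d ≤ n) (z : Fin n → ℝ)
    (R : Set (EuclideanSpace ℝ (Fin d))) :
    μH[(d : ℝ)] R ≤ μH[(d : ℝ)] (phiMap n d z '' R) := by
  have h1 : R ⊆ projE n d hdn '' (phiMap n d z '' R) := by
    intro v hv
    refine ⟨phiMap n d z v, Set.mem_image_of_mem _ hv, ?_⟩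
    ext j
    exact phiMap_castLE hd hdn z v j
  calc μH[(d : ℝ)] R ≤ μH[(d : ℝ)] (projE n d hdn '' (phiMap n d z '' R)) := measure_mono h1
    _ ≤ 1 ^ (d : ℝ) * μH[(d : ℝ)] (phiMap n d z '' R) :=
        (projE_lipschitz hdn).hausdorffMeasure_image_le (by positivity) _
    _ = μH[(d : ℝ)] (phiMap n d z '' R) := by simp

end Helpers

/-- A coordinate box in Euclidean space. -/
def box (k : ℕ) (lo hi : ℕ → ℝ) : Set (EuclideanSpace ℝ (Fin k)) :=
  {x | ∀ i : Fin k, x i ∈ Set.Icc (lo (i : ℕ)) (hi (i : ℕ))}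

lemma box_eq_preimage (k : ℕ) (lo hi : ℕ → ℝ) :
    box k lo hi = (MeasurableEquiv.toLp 2 (Fin k → ℝ)).symm ⁻¹'
      (Set.pi Set.univ fun i : Fin k => Set.Icc (lo (i : ℕ)) (hi (i : ℕ))) := by
  ext x
  simp only [box, Set.mem_preimage, Set.mem_univ_pi, Set.mem_setOf_eq]
  exact Iff.rfl

lemma box_measurableSet (k : ℕ) (lo hi : ℕ → ℝ) : MeasurableSet (box k lo hi) := by
  rw [box_eq_preimage]
  exact (MeasurableEquiv.toLp 2 (Fin k → ℝ)).symm.measurable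
    (MeasurableSet.univ_pi fun i => measurableSet_Icc)

lemma box_volume (k : ℕ) (lo hi : ℕ → ℝ) :
    volume (box k lo hi) = ∏ i ∈ Finset.range k, ENNReal.ofReal (hi i - lo i) := by
  rw [box_eq_preimage,
    (EuclideanSpace.volume_preserving_symm_measurableEquiv_toLp (Fin k)).measure_preimage
      (MeasurableSet.univ_pi fun i => measurableSet_Icc).nullMeasurableSet,
    volume_pi_pi]
  simp only [Real.volume_Icc]
  exact Fin.prod_univ_eq_prod_range (fun i => ENNReal.ofReal (hi i - lo i)) k

/-- Lower bound for the Hausdorff measure of a box in Euclidean space. -/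
lemma box_hausdorff_lb (k : ℕ) (lo hi : ℕ → ℝ) :
    (∏ i ∈ Finset.range k, ENNReal.ofReal (hi i - lo i)) ≤ μH[(k : ℝ)] (box k lo hi) := by
  have h1 : μH[(k:ℝ)] ((WithLp.equiv 2 (Fin k → ℝ)) '' (box k lo hi))
      ≤ 1 ^ (k:ℝ) * μH[(k:ℝ)] (box k lo hi) :=
    (PiLp.lipschitzWith_ofLp 2 _).hausdorffMeasure_image_le (by positivity) _
  have h2 : (μH[(k:ℝ)] : Measure (Fin k → ℝ)) = volume := by
    simpa using MeasureTheory.hausdorffMeasure_pi_real (ι := Fin k)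
  have h3 : (WithLp.equiv 2 (Fin k → ℝ)) '' (box k lo hi)
      = Set.pi Set.univ fun i : Fin k => Set.Icc (lo (i : ℕ)) (hi (i : ℕ)) := by
    ext w
    simp only [Set.mem_image, Set.mem_pi, Set.mem_univ, forall_true_left]
    constructor
    · rintro ⟨v, hv, rfl⟩ i; exact hv i
    · intro hw; exact ⟨WithLp.toLp 2 w, fun i => hw i, rfl⟩
  rw [h3, h2] at h1
  rw [volume_pi_pi] at h1
  simp only [Real.volume_Icc] at h1
  rw [← Fin.prod_univ_eq_prod_range (fun i => ENNReal.ofReal (hi i - lo i)) k]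
  simpa using h1

lemma prod_tri {d e n : ℕ} (hd : 1 ≤ d) (hn : n = d + e) (g : ℕ → ℝ≥0∞) (a b c : ℝ≥0∞)
    (h1 : ∀ i, i + 1 < d → g i = a) (h2 : g (d - 1) = b)
    (h3 : ∀ i, d ≤ i → i < n → g i = c) :
    ∏ i ∈ Finset.range n, g i = a ^ (d - 1) * b * c ^ e := by
  subst hn
  rw [Finset.prod_range_add]
  have hd' : d = (d - 1) + 1 := by omega
  rw [hd', Finset.prod_range_succ]
  rw [Finset.prod_congr rfl (fun i hi => h1 i (by have := Finset.mem_range.1 hi; omega)),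
    Finset.prod_const, Finset.card_range]
  rw [Finset.prod_congr rfl (fun i hi => h3 ((d-1)+1+i) (by omega)
      (by have := Finset.mem_range.1 hi; omega)), Finset.prod_const, Finset.card_range]
  rw [show (d-1)+1-1 = d - 1 by omega, h2]

/-- The key one-dimensional approximation estimate. -/
lemma key_est {K : ℕ} {M L b c : ℝ} (hM : 1 ≤ M) (hK1 : 1 ≤ K) (hKM : (K : ℝ) ≤ M)
    (hL : L = max ((K : ℝ) - 1) 1) (hb : M ≤ b) (hb2 : b ≤ 2 * M) (hc0 : 0 ≤ c) (hcL : c ≤ L) :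
    |c - b * ((min ⌊c * M / b⌋₊ (K - 1) : ℕ) : ℝ) / M| ≤ 2 := by
  have hM0 : (0:ℝ) < M := by linarith
  have hb0 : (0:ℝ) < b := by linarith
  set q := c * M / b with hq_def
  have hq0 : 0 ≤ q := by positivity
  by_cases hK : K = 1
  · subst hK
    simp only [Nat.sub_self, min_zero, Nat.cast_zero, mul_zero, zero_div, sub_zero]
    rw [abs_of_nonneg hc0]
    have : L = 1 := by rw [hL]; simp
    linarith [hcL, this ▸ hcL]
  · have hK2 : 2 ≤ K := by omega
    have hK2R : (2:ℝ) ≤ (K:ℝ) := by exact_mod_cast hK2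
    have hLK : L = (K:ℝ) - 1 := by rw [hL, max_eq_left (by linarith)]
    have hqc : q ≤ c := by
      rw [hq_def, div_le_iff₀ hb0]
      nlinarith
    have hfloor_le : ⌊q⌋₊ ≤ K - 1 := by
      have hq2 : q ≤ ((K - 1 : ℕ) : ℝ) := by
        rw [Nat.cast_sub hK1]
        push_cast
        linarith [hLK ▸ hcL]
      calc ⌊q⌋₊ ≤ ⌊((K - 1 : ℕ) : ℝ)⌋₊ := Nat.floor_le_floor hq2
        _ = K - 1 := Nat.floor_natCast _
    rw [min_eq_left hfloor_le]
    have h1 : (⌊q⌋₊ : ℝ) ≤ q := Nat.floor_le hq0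
    have h2 : q < ⌊q⌋₊ + 1 := Nat.lt_floor_add_one q
    have hcq : c = q * b / M := by
      rw [hq_def]; field_simp
    rw [abs_le]
    constructor
    · rw [hcq]
      have heq : q * b / M - b * (⌊q⌋₊:ℝ) / M = b * (q - ⌊q⌋₊) / M := by ring
      rw [heq]
      have : 0 ≤ b * (q - ⌊q⌋₊) / M :=
        div_nonneg (mul_nonneg (le_of_lt hb0) (sub_nonneg.2 h1)) (le_of_lt hM0)
      linarith
    · rw [hcq]
      have hbM : b / M ≤ 2 := by rw [div_le_iff₀ hM0]; linarith
      have : q * b / M - b * (⌊q⌋₊:ℝ) / M = (b / M) * (q - ⌊q⌋₊) := by field_simp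
      rw [this]
      have h3 : q - ⌊q⌋₊ ≤ 1 := by linarith
      have h4 : 0 ≤ q - ⌊q⌋₊ := by linarith
      have h5 : 0 ≤ b / M := by positivity
      nlinarith

section Defs

def DloF (d : ℕ) (M : ℝ) : ℕ → ℝ := fun i => if i + 1 = d then M else 0
def DhiF (d : ℕ) (M L : ℝ) : ℕ → ℝ :=
  fun i => if i + 1 < d then M else if i + 1 = d then 2 * M else L
def EhiF (d : ℕ) (M : ℝ) : ℕ → ℝ :=
  fun i => if i + 1 < d then M else if i + 1 = d then 1 else 4
def RloF (n d : ℕ) (M : ℝ) (x : EuclideanSpace ℝ (Fin n)) : ℕ → ℝ :=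
  fun j => if h : j < n then x ⟨j, h⟩ - (if j + 1 < d then M else 1) else 0
def RhiF (n d : ℕ) (x : EuclideanSpace ℝ (Fin n)) : ℕ → ℝ :=
  fun j => if h : j < n then x ⟨j, h⟩ + (if j + 1 < d then 0 else 1) else 0

noncomputable def zfnF (n d e K : ℕ) (M : ℝ) (hne : n = d + e) (m : Fin e → Fin K) : Fin n → ℝ :=
  fun i => if h : d ≤ (i : ℕ) then ((m ⟨(i : ℕ) - d, by omega⟩ : ℕ) : ℝ) / M else 0

noncomputable def mfunF (n d e K : ℕ) (hd : 1 ≤ d) (hne : n = d + e) (hK1 : 1 ≤ K) (M : ℝ)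
    (x : EuclideanSpace ℝ (Fin n)) : Fin e → Fin K :=
  fun k => ⟨min ⌊(x ⟨d + (k : ℕ), by omega⟩) * M / (x ⟨d - 1, by omega⟩)⌋₊ (K - 1), by omega⟩

lemma zfn_mfun {n d e K : ℕ} (hd : 1 ≤ d) (hne : n = d + e) (hK1 : 1 ≤ K) (M : ℝ)
    (x : EuclideanSpace ℝ (Fin n)) (i : Fin n) (hi : d ≤ (i : ℕ)) :
    zfnF n d e K M hne (mfunF n d e K hd hne hK1 M x) i
      = ((min ⌊(x i) * M / (x ⟨d - 1, by omega⟩)⌋₊ (K - 1) : ℕ) : ℝ) / M := by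
  rw [zfnF, dif_pos hi]
  have hidx : (⟨d + ((i : ℕ) - d), by omega⟩ : Fin n) = i := by
    ext; simp only [Fin.val_mk]; omega
  rw [mfunF]
  simp only [Fin.val_mk]
  rw [show x ⟨d + ((i : ℕ) - d), by omega⟩ = x i from congrArg x hidx]

lemma zfn_bounds {n d e K : ℕ} (hne : n = d + e) (M : ℝ) (hM1 : 1 ≤ M) (hKM : (K : ℝ) ≤ M)
    (m : Fin e → Fin K) (i : Fin n) :
    0 ≤ zfnF n d e K M hne m i ∧ zfnF n d e K M hne m i ≤ 1 := by
  rw [zfnF]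
  split
  · constructor
    · positivity
    · rw [div_le_one (by linarith)]
      calc ((m _ : ℕ) : ℝ) ≤ (K : ℝ) := by exact_mod_cast le_of_lt (Fin.is_lt _)
        _ ≤ M := hKM
  · norm_num

end Defs

lemma point_lb (n d e K : ℕ) (hd : 1 ≤ d) (hdn : d < n) (hne : n = d + e) (hK1 : 1 ≤ K)
    (M L : ℝ) (hM1 : 1 ≤ M) (hKM : (K : ℝ) ≤ M) (hL : L = max ((K : ℝ) - 1) 1)
    (x : EuclideanSpace ℝ (Fin n)) (hx : x ∈ box n (DloF d M) (DhiF d M L))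
    (z : Fin n → ℝ) (hz : z = zfnF n d e K M hne (mfunF n d e K hd hne hK1 M x)) :
    phiMap n d z '' (box d (RloF n d M x) (RhiF n d x)) ⊆
      (↑(span ℝ (Set.range (Bfam n d z))) ∩
        Metric.ball (0 : EuclideanSpace ℝ (Fin n)) (4 * n * M))
      ∩ {y | x - y ∈ box n (fun i => -(EhiF d M i)) (EhiF d M)} := by
  have hdn' : d ≤ n := le_of_lt hdn
  have hM0 : (0 : ℝ) < M := by linarith
  have hb_lt : d - 1 < n := by omega
  set xb := x ⟨d - 1, hb_lt⟩ with hxb_def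
  -- coordinate facts about x
  have hxa : ∀ i : Fin n, (i : ℕ) + 1 < d → 0 ≤ x i ∧ x i ≤ M := by
    intro i hi
    have h := hx i
    rw [Set.mem_Icc] at h
    simp only [DloF, DhiF] at h
    rw [if_neg (by omega : ¬((i : ℕ) + 1 = d)), if_pos hi] at h
    exact h
  have hxbI : M ≤ xb ∧ xb ≤ 2 * M := by
    have h := hx ⟨d - 1, hb_lt⟩
    rw [Set.mem_Icc] at h
    simp only [DloF, DhiF, Fin.val_mk] at h
    rw [if_pos (by omega : d - 1 + 1 = d), if_neg (by omega : ¬(d - 1 + 1 < d)),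
      if_pos (by omega : d - 1 + 1 = d)] at h
    exact h
  have hxc : ∀ i : Fin n, d ≤ (i : ℕ) → 0 ≤ x i ∧ x i ≤ L := by
    intro i hi
    have h := hx i
    rw [Set.mem_Icc] at h
    simp only [DloF, DhiF] at h
    rw [if_neg (by omega : ¬((i : ℕ) + 1 = d)), if_neg (by omega : ¬((i : ℕ) + 1 < d)),
      if_neg (by omega : ¬((i : ℕ) + 1 = d))] at h
    exact h
  -- slope values
  have hz01 : ∀ i : Fin n, 0 ≤ z i ∧ z i ≤ 1 := by
    intro i; rw [hz]; exact zfn_bounds hne M hM1 hKM _ i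
  have hzkey : ∀ i : Fin n, d ≤ (i : ℕ) → |x i - xb * z i| ≤ 2 := by
    intro i hi
    rw [hz, zfn_mfun hd hne hK1 M x i hi, ← mul_div_assoc]
    exact key_est hM1 hK1 hKM hL hxbI.1 hxbI.2 (hxc i hi).1 (hxc i hi).2
  -- facts about v
  rintro _ ⟨v, hv, rfl⟩
  have hva : ∀ j : Fin d, (j : ℕ) + 1 < d →
      x ⟨(j : ℕ), by omega⟩ - M ≤ v j ∧ v j ≤ x ⟨(j : ℕ), by omega⟩ := by
    intro j hj
    have h := hv j
    rw [Set.mem_Icc] at h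
    simp only [RloF, RhiF] at h
    rw [dif_pos (show (j : ℕ) < n by omega), dif_pos (show (j : ℕ) < n by omega),
      if_pos hj, if_pos hj] at h
    constructor
    · exact h.1
    · have := h.2; linarith
  have jb : Fin d := ⟨d - 1, by omega⟩
  have hvb : xb - 1 ≤ v ⟨d - 1, by omega⟩ ∧ v ⟨d - 1, by omega⟩ ≤ xb + 1 := by
    have h := hv ⟨d - 1, by omega⟩
    rw [Set.mem_Icc] at h
    simp only [RloF, RhiF, Fin.val_mk] at h
    rw [dif_pos (show d - 1 < n by omega), dif_pos (show d - 1 < n by omega),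
      if_neg (by omega : ¬(d - 1 + 1 < d)), if_neg (by omega : ¬(d - 1 + 1 < d))] at h
    exact h
  -- coordinates of phiMap
  have hcoord_lt : ∀ i : Fin n, (h : (i : ℕ) < d) → phiMap n d z v i = v ⟨(i : ℕ), h⟩ := by
    intro i h
    have h1 := phiMap_castLE hd hdn' z v ⟨(i : ℕ), h⟩
    have h2 : Fin.castLE hdn' ⟨(i : ℕ), h⟩ = i := by ext; simp
    rw [h2] at h1
    exact h1
  have hcoord_ge : ∀ i : Fin n, d ≤ (i : ℕ) →
      phiMap n d z v i = v ⟨d - 1, by omega⟩ * z i := fun i hi => phiMap_ge hd z v i hi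
  have habs : ∀ i : Fin n, |phiMap n d z v i| ≤ 3 * M := by
    intro i
    by_cases h : (i : ℕ) < d
    · rw [hcoord_lt i h]
      by_cases h2 : (i : ℕ) + 1 < d
      · have h3 := hva ⟨(i : ℕ), h⟩ h2
        have h4 := hxa i h2
        rw [abs_le]
        constructor <;> [linarith [h3.1, h4.1]; linarith [h3.2, h4.2]]
      · have hieq : (i : ℕ) = d - 1 := by omega
        have h3 : v ⟨(i : ℕ), h⟩ = v ⟨d - 1, by omega⟩ := by
          exact congrArg (fun k => v k) (Fin.ext hieq)
        rw [h3, abs_le]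
        constructor <;> [linarith [hvb.1, hxbI.1]; linarith [hvb.2, hxbI.2]]
    · push_neg at h
      rw [hcoord_ge i h, abs_mul]
      have h1 : |v ⟨d - 1, by omega⟩| ≤ 2 * M + 1 := by
        rw [abs_le]; constructor <;> [linarith [hvb.1, hxbI.1]; linarith [hvb.2, hxbI.2]]
      have h2 : |z i| ≤ 1 := by
        rw [abs_le]; constructor <;> [linarith [(hz01 i).1]; exact (hz01 i).2]
      calc |v ⟨d - 1, by omega⟩| * |z i| ≤ (2 * M + 1) * 1 :=
            mul_le_mul h1 h2 (abs_nonneg _) (by linarith)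
        _ ≤ 3 * M := by linarith
  refine ⟨⟨phiMap_mem_span z v, ?_⟩, ?_⟩
  · -- ball membership
    rw [mem_ball_zero_iff, EuclideanSpace.norm_eq]
    have hn0 : (0 : ℝ) < (n : ℝ) := by exact_mod_cast (show 0 < n by omega)
    have hn1R : (1 : ℝ) ≤ (n : ℝ) := by exact_mod_cast (show 1 ≤ n by omega)
    have hsum : ∑ i : Fin n, ‖phiMap n d z v i‖ ^ 2 ≤ (n : ℝ) * (3 * M) ^ 2 := by
      calc ∑ i : Fin n, ‖phiMap n d z v i‖ ^ 2 ≤ ∑ _i : Fin n, (3 * M) ^ 2 := by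
            apply Finset.sum_le_sum
            intro i _
            have := habs i
            rw [Real.norm_eq_abs]
            nlinarith [abs_nonneg (phiMap n d z v i)]
        _ = (n : ℝ) * (3 * M) ^ 2 := by rw [Finset.sum_const, Finset.card_univ,
              Fintype.card_fin, nsmul_eq_mul]
    calc Real.sqrt (∑ i : Fin n, ‖phiMap n d z v i‖ ^ 2)
        ≤ Real.sqrt ((n : ℝ) * (3 * M) ^ 2) := Real.sqrt_le_sqrt hsum
      _ ≤ Real.sqrt ((3 * n * M) ^ 2) := by
          apply Real.sqrt_le_sqrt
          nlinarith [mul_nonneg (mul_nonneg (mul_nonneg (by norm_num : (0:ℝ) ≤ 9)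
            (sq_nonneg M)) hn0.le) (sub_nonneg.2 hn1R)]
      _ = 3 * n * M := Real.sqrt_sq (by positivity)
      _ < 4 * n * M := by nlinarith
  · -- E membership
    intro i
    rw [Set.mem_Icc, PiLp.sub_apply]
    show -EhiF d M (i : ℕ) ≤ x i - phiMap n d z v i ∧ x i - phiMap n d z v i ≤ EhiF d M (i : ℕ)
    by_cases h2 : (i : ℕ) + 1 < d
    · have h : (i : ℕ) < d := by omega
      rw [hcoord_lt i h]
      have h3 := hva ⟨(i : ℕ), h⟩ h2
      have hEv : EhiF d M (i : ℕ) = M := by rw [EhiF, if_pos h2]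
      have hxi : x ⟨(i : ℕ), by omega⟩ = x i := by congr 1
      rw [hxi] at h3
      rw [hEv]
      constructor <;> [linarith [h3.2, hM0.le]; linarith [h3.1]]
    · by_cases h3 : (i : ℕ) + 1 = d
      · have h : (i : ℕ) < d := by omega
        rw [hcoord_lt i h]
        have hieq : (i : ℕ) = d - 1 := by omega
        have hveq : v ⟨(i : ℕ), h⟩ = v ⟨d - 1, by omega⟩ := by exact congrArg (fun k => v k) (Fin.ext hieq)
        have hxieq : x i = xb := by rw [hxb_def]; exact congrArg (fun k => x k) (Fin.ext hieq)
        have hEv : EhiF d M (i : ℕ) = 1 := by rw [EhiF, if_neg h2, if_pos h3]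
        rw [hEv, hveq, hxieq]
        constructor <;> [linarith [hvb.2]; linarith [hvb.1]]
      · have hi : d ≤ (i : ℕ) := by omega
        rw [hcoord_ge i hi]
        have hEv : EhiF d M (i : ℕ) = 4 := by rw [EhiF, if_neg h2, if_neg h3]
        rw [hEv]
        have hk := hzkey i hi
        have hz1 := hz01 i
        have hvb1 := hvb
        have hrw : x i - v ⟨d - 1, by omega⟩ * z i
            = (x i - xb * z i) + (xb - v ⟨d - 1, by omega⟩) * z i := by ring
        have habs2 : |(xb - v ⟨d - 1, by omega⟩) * z i| ≤ 1 := by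
          rw [abs_mul]
          have e1 : |xb - v ⟨d - 1, by omega⟩| ≤ 1 := by
            rw [abs_le]; constructor <;> [linarith [hvb1.2]; linarith [hvb1.1]]
          have e2 : |z i| ≤ 1 := by rw [abs_le]; constructor <;> [linarith [hz1.1]; exact hz1.2]
          calc |xb - v ⟨d - 1, by omega⟩| * |z i| ≤ 1 * 1 :=
                mul_le_mul e1 e2 (abs_nonneg _) zero_le_one
            _ = 1 := one_mul 1
        have htot : |x i - v ⟨d - 1, by omega⟩ * z i| ≤ 3 := by
          rw [hrw]
          calc |(x i - xb * z i) + (xb - v ⟨d - 1, by omega⟩) * z i|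
              ≤ |x i - xb * z i| + |(xb - v ⟨d - 1, by omega⟩) * z i| := abs_add_le _ _
            _ ≤ 2 + 1 := add_le_add hk habs2
            _ = 3 := by norm_num
        rw [abs_le] at htot
        constructor <;> [linarith [htot.1]; linarith [htot.2]]

/-- The thin `d`-dimensional subspace average at scale `s` along `σ`, defined with the
`d`-dimensional Hausdorff measure on `σ`. -/
noncomputable def thinAvg {n : ℕ} (d : ℕ) (σ : Submodule ℝ (EuclideanSpace ℝ (Fin n)))
    (s : ℝ) (f : EuclideanSpace ℝ (Fin n) → ℝ≥0∞) (x : EuclideanSpace ℝ (Fin n)) : ℝ≥0∞ :=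
  (ENNReal.ofReal (s ^ d))⁻¹ *
    ∫⁻ y in (↑σ ∩ Metric.ball (0 : EuclideanSpace ℝ (Fin n)) s), f (x - y) ∂ μH[(d : ℝ)]

/-- The `L^p(ℝⁿ)` norm of an `ℝ≥0∞`-valued function. -/
noncomputable def lpN {n : ℕ} (p : ℝ) (g : EuclideanSpace ℝ (Fin n) → ℝ≥0∞) : ℝ≥0∞ :=
  (∫⁻ x, g x ^ p) ^ (1 / p)

set_option maxHeartbeats 1000000 in
theorem stmt8 (n d : ℕ) (hd : 1 ≤ d) (hdn : d < n)
    (p : ℝ) (hp1 : 1 < p) (hp2 : p < (n : ℝ) - d + 1) :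
    ∃ c > 0, ∀ (N : ℕ), 2 ≤ N → ∀ A : ℝ,
      (∀ (S : Set (Submodule ℝ (EuclideanSpace ℝ (Fin n)))),
        S.Finite → S.ncard ≤ N → (∀ σ ∈ S, Module.finrank ℝ σ = d) →
        ∀ s : ℝ, 0 < s →
        ∀ f : EuclideanSpace ℝ (Fin n) → ℝ≥0∞, Measurable f →
          lpN p (fun x => ⨆ σ ∈ S, thinAvg d σ s f x) ≤ ENNReal.ofReal A * lpN p f) →
      c * (N : ℝ) ^ (((n : ℝ) - d + 1 - p) / (p * ((n : ℝ) - d))) ≤ A := by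
  have hdn' : d ≤ n := le_of_lt hdn
  have hn1 : 1 ≤ n := by omega
  have hn0R : (0:ℝ) < (n:ℝ) := by exact_mod_cast (show 0 < n by omega)
  set e := n - d with he_def
  have hne : n = d + e := by omega
  have he1 : 1 ≤ e := by omega
  have he0R : (0:ℝ) < (e:ℝ) := by exact_mod_cast (show 0 < e by omega)
  have hecast : ((e : ℕ) : ℝ) = (n:ℝ) - (d:ℝ) := by
    rw [he_def]; exact Nat.cast_sub hdn'
  have hp0 : (0:ℝ) < p := lt_trans one_pos hp1
  have hpne : p ≠ 0 := ne_of_gt hp0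
  have hc0 : (0:ℝ) < ((4*(n:ℝ))^d * ((2:ℝ)^d * 32^e))⁻¹ := by
    apply inv_pos.2
    exact mul_pos (pow_pos (by linarith) d)
      (mul_pos (pow_pos two_pos d) (pow_pos (by norm_num) e))
  refine ⟨((4*(n:ℝ))^d * ((2:ℝ)^d * 32^e))⁻¹, hc0, ?_⟩
  intro N hN A hA
  have hN1 : (1:ℝ) ≤ (N:ℝ) := by exact_mod_cast (show 1 ≤ N by omega)
  set M := (N:ℝ) ^ ((e:ℝ)⁻¹) with hM_def
  have hM1 : 1 ≤ M := by
    rw [hM_def]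
    calc (1:ℝ) = (1:ℝ) ^ ((e:ℝ)⁻¹) := (Real.one_rpow _).symm
      _ ≤ (N:ℝ) ^ ((e:ℝ)⁻¹) := Real.rpow_le_rpow zero_le_one hN1 (by positivity)
  have hM0 : (0:ℝ) < M := by linarith
  have hMe : M ^ e = (N:ℝ) := by
    rw [hM_def]; exact Real.rpow_inv_natCast_pow (by positivity) (by omega)
  set K := ⌊M⌋₊ with hK_def
  have hK1 : 1 ≤ K := Nat.le_floor (by exact_mod_cast hM1)
  have hKM : (K:ℝ) ≤ M := Nat.floor_le hM0.le
  have hMK1 : M < (K:ℝ) + 1 := by exact_mod_cast Nat.lt_floor_add_one M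
  set L := max ((K:ℝ) - 1) 1 with hL_def
  have hL1 : (1:ℝ) ≤ L := le_max_right _ _
  have hL0 : (0:ℝ) < L := by linarith
  have hLM4 : M / 4 ≤ L := by
    rcases le_or_gt M 4 with h | h
    · calc M/4 ≤ 1 := by linarith
        _ ≤ L := hL1
    · calc M/4 ≤ M - 2 := by linarith
        _ ≤ (K:ℝ) - 1 := by linarith
        _ ≤ L := le_max_left _ _
  set SS := (fun m : Fin e → Fin K =>
    span ℝ (Set.range (Bfam n d (zfnF n d e K M hne m)))) '' Set.univ with hSS_def
  have hSfin : SS.Finite := Set.Finite.image _ Set.finite_univ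
  have hcard : SS.ncard ≤ N := by
    have h1 : SS.ncard ≤ (Set.univ : Set (Fin e → Fin K)).ncard :=
      Set.ncard_image_le Set.finite_univ
    have h2 : (Set.univ : Set (Fin e → Fin K)).ncard = K ^ e := by
      rw [Set.ncard_univ, Nat.card_fun]
      simp [Nat.card_eq_fintype_card]
    have h3 : K ^ e ≤ N := by
      have : ((K:ℝ))^e ≤ (N:ℝ) := by
        rw [← hMe]; exact pow_le_pow_left₀ (by positivity) hKM e
      exact_mod_cast this
    omega
  have hrank : ∀ σ ∈ SS, Module.finrank ℝ σ = d := by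
    rintro σ ⟨m, -, rfl⟩
    exact finrank_span_Bfam hd hdn' _
  set sR := 4 * (n:ℝ) * M with hsR_def
  have hs0 : 0 < sR := mul_pos (mul_pos (by norm_num) hn0R) hM0
  set Eb := box n (fun i => -(EhiF d M i)) (EhiF d M) with hEb_def
  have hEbm : MeasurableSet Eb := box_measurableSet _ _ _
  set f := Eb.indicator (fun _ => (1:ℝ≥0∞)) with hf_def
  have hfmeas : Measurable f := measurable_const.indicator hEbm
  have happ := hA SS hSfin hcard hrank sR hs0 f hfmeas
  set Db := box n (DloF d M) (DhiF d M L) with hDb_def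
  have hDbm : MeasurableSet Db := box_measurableSet _ _ _
  set β := (ENNReal.ofReal (sR ^ d))⁻¹ * ENNReal.ofReal (M ^ (d-1) * 2) with hβ_def
  -- pointwise lower bound on the D-box
  have hpoint : ∀ x ∈ Db, β ≤ ⨆ σ ∈ SS, thinAvg d σ sR f x := by
    intro x hx
    set z := zfnF n d e K M hne (mfunF n d e K hd hne hK1 M x) with hz_def
    have hsub := point_lb n d e K hd hdn hne hK1 M L hM1 hKM hL_def x hx z hz_def
    set σx : Submodule ℝ (EuclideanSpace ℝ (Fin n)) := span ℝ (Set.range (Bfam n d z))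
      with hσx_def
    have hσS : σx ∈ SS := ⟨mfunF n d e K hd hne hK1 M x, Set.mem_univ _, rfl⟩
    have hRxμ : ENNReal.ofReal (M^(d-1) * 2)
        ≤ μH[(d:ℝ)] (phiMap n d z '' box d (RloF n d M x) (RhiF n d x)) := by
      have hprod : (∏ i ∈ Finset.range d, ENNReal.ofReal (RhiF n d x i - RloF n d M x i))
          = ENNReal.ofReal M ^ (d-1) * ENNReal.ofReal 2 * (1:ℝ≥0∞) ^ 0 := by
        apply prod_tri hd (show d = d + 0 by omega)
        · intro i hi
          have hin : i < n := by omega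
          simp only [RhiF, RloF]
          rw [dif_pos hin, dif_pos hin, if_pos hi, if_pos hi]
          rw [show x ⟨i, hin⟩ + 0 - (x ⟨i, hin⟩ - M) = M by ring]
        · have hin : d - 1 < n := by omega
          simp only [RhiF, RloF]
          rw [dif_pos hin, dif_pos hin, if_neg (by omega : ¬(d-1+1 < d)),
            if_neg (by omega : ¬(d-1+1 < d))]
          rw [show x ⟨d-1, hin⟩ + 1 - (x ⟨d-1, hin⟩ - 1) = 2 by ring]
        · intro i hi1 hi2; omega
      calc ENNReal.ofReal (M^(d-1) * 2)
          = ENNReal.ofReal M ^ (d-1) * ENNReal.ofReal 2 * (1:ℝ≥0∞)^0 := by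
            rw [ENNReal.ofReal_mul (by positivity), ENNReal.ofReal_pow hM0.le, pow_zero, mul_one]
        _ = ∏ i ∈ Finset.range d, ENNReal.ofReal (RhiF n d x i - RloF n d M x i) := hprod.symm
        _ ≤ μH[(d:ℝ)] (box d (RloF n d M x) (RhiF n d x)) := box_hausdorff_lb _ _ _
        _ ≤ μH[(d:ℝ)] (phiMap n d z '' box d (RloF n d M x) (RhiF n d x)) :=
            hausdorff_phiMap_lb hd hdn' z _
    have hint : ENNReal.ofReal (M^(d-1) * 2)
        ≤ ∫⁻ y in (↑σx ∩ Metric.ball (0:EuclideanSpace ℝ (Fin n)) sR), f (x - y) ∂ μH[(d:ℝ)] := by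
      set W := (fun y : EuclideanSpace ℝ (Fin n) => x - y) ⁻¹' Eb with hW_def
      have hWm : MeasurableSet W := hEbm.preimage (measurable_const.sub measurable_id)
      have hfW : ∀ y, f (x - y) = W.indicator (fun _ => (1:ℝ≥0∞)) y := by
        intro y
        rw [hf_def]
        by_cases h : y ∈ W
        · rw [Set.indicator_of_mem h, Set.indicator_of_mem (by exact h)]
        · rw [Set.indicator_of_notMem h, Set.indicator_of_notMem (by exact h)]
      calc ENNReal.ofReal (M^(d-1) * 2)
          ≤ μH[(d:ℝ)] (phiMap n d z '' box d (RloF n d M x) (RhiF n d x)) := hRxμ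
        _ ≤ μH[(d:ℝ)] (W ∩ (↑σx ∩ Metric.ball 0 sR)) := by
            apply measure_mono
            intro y hy
            obtain ⟨h1, h2⟩ := hsub hy
            exact ⟨h2, h1⟩
        _ = (μH[(d:ℝ)].restrict (↑σx ∩ Metric.ball 0 sR)) W := (Measure.restrict_apply hWm).symm
        _ = ∫⁻ y in (↑σx ∩ Metric.ball 0 sR), W.indicator (fun _ => (1:ℝ≥0∞)) y ∂ μH[(d:ℝ)] := by
            rw [lintegral_indicator_const hWm, one_mul]
        _ = ∫⁻ y in (↑σx ∩ Metric.ball 0 sR), f (x - y) ∂ μH[(d:ℝ)] :=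
            lintegral_congr (fun y => (hfW y).symm)
    have hthin : β ≤ thinAvg d σx sR f x := by
      rw [hβ_def, thinAvg]
      exact mul_le_mul_right hint _
    exact le_trans hthin (le_biSup (f := fun σ => thinAvg d σ sR f x) hσS)
  -- L^p lower bound for the maximal function
  have hlpg : (β ^ p * volume Db) ^ (1/p) ≤ lpN p (fun x => ⨆ σ ∈ SS, thinAvg d σ sR f x) := by
    rw [lpN]
    apply ENNReal.rpow_le_rpow _ (by positivity)
    calc β ^ p * volume Db
        = ∫⁻ x, Db.indicator (fun _ => β ^ p) x := (lintegral_indicator_const hDbm _).symm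
      _ ≤ ∫⁻ x, (⨆ σ ∈ SS, thinAvg d σ sR f x) ^ p := by
          apply lintegral_mono
          intro x
          by_cases h : x ∈ Db
          · rw [Set.indicator_of_mem h]
            exact ENNReal.rpow_le_rpow (hpoint x h) hp0.le
          · rw [Set.indicator_of_notMem h]; exact zero_le
  have hlpf : lpN p f = (volume Eb) ^ (1/p) := by
    rw [lpN]
    congr 1
    calc ∫⁻ x, f x ^ p = ∫⁻ x, f x := by
          apply lintegral_congr
          intro x
          rw [hf_def]
          by_cases h : x ∈ Eb
          · rw [Set.indicator_of_mem h]; exact ENNReal.one_rpow p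
          · rw [Set.indicator_of_notMem h]; exact ENNReal.zero_rpow_of_pos hp0
      _ = volume Eb := by rw [hf_def, lintegral_indicator_const hEbm, one_mul]
  -- volumes of the boxes
  have hvolD : volume Db = ENNReal.ofReal (M^(d-1) * M * L^e) := by
    rw [hDb_def, box_volume]
    rw [prod_tri hd hne _ (ENNReal.ofReal M) (ENNReal.ofReal M) (ENNReal.ofReal L)
      (fun i hi => by
        simp only [DhiF, DloF]
        rw [if_pos hi, if_neg (by omega : ¬(i+1 = d)), sub_zero])
      (by
        simp only [DhiF, DloF]
        rw [if_neg (by omega : ¬(d-1+1 < d)), if_pos (by omega : d-1+1 = d),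
          if_pos (by omega : d-1+1 = d)]
        rw [show (2*M - M : ℝ) = M by ring])
      (fun i h1 h2 => by
        simp only [DhiF, DloF]
        rw [if_neg (by omega : ¬(i+1 < d)), if_neg (by omega : ¬(i+1 = d)),
          if_neg (by omega : ¬(i+1 = d)), sub_zero])]
    rw [← ENNReal.ofReal_pow hM0.le, ← ENNReal.ofReal_mul (pow_nonneg hM0.le (d-1)),
      ← ENNReal.ofReal_pow hL0.le,
      ← ENNReal.ofReal_mul (mul_nonneg (pow_nonneg hM0.le (d-1)) hM0.le)]
  have hvolE : volume Eb = ENNReal.ofReal ((2*M)^(d-1) * 2 * 8^e) := by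
    rw [hEb_def, box_volume]
    rw [prod_tri hd hne _ (ENNReal.ofReal (2*M)) (ENNReal.ofReal 2) (ENNReal.ofReal 8)
      (fun i hi => by
        simp only [EhiF]
        rw [if_pos hi]
        rw [show (M - -M : ℝ) = 2*M by ring])
      (by
        simp only [EhiF]
        rw [if_neg (by omega : ¬(d-1+1 < d)), if_pos (by omega : d-1+1 = d)]
        rw [show ((1:ℝ) - -1) = 2 by norm_num])
      (fun i h1 h2 => by
        simp only [EhiF]
        rw [if_neg (by omega : ¬(i+1 < d)), if_neg (by omega : ¬(i+1 = d))]
        rw [show ((4:ℝ) - -4) = 8 by norm_num])]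
    rw [← ENNReal.ofReal_pow (by positivity : (0:ℝ) ≤ 2*M),
      ← ENNReal.ofReal_mul (pow_nonneg (by positivity : (0:ℝ) ≤ 2*M) (d-1)),
      ← ENNReal.ofReal_pow (by norm_num : (0:ℝ) ≤ 8),
      ← ENNReal.ofReal_mul (mul_nonneg (pow_nonneg (by positivity : (0:ℝ) ≤ 2*M) (d-1)) (by norm_num : (0:ℝ) ≤ 2))]
  -- combine
  have hchain : (β ^ p * volume Db) ^ (1/p) ≤ ENNReal.ofReal A * (volume Eb)^(1/p) := by
    rw [← hlpf]; exact le_trans hlpg happ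
  set B1 := (sR^d)⁻¹ * (M^(d-1) * 2) with hB1_def
  have hB1pos : 0 < B1 := mul_pos (inv_pos.2 (pow_pos hs0 d)) (by positivity)
  have hβeq : β = ENNReal.ofReal B1 := by
    rw [hβ_def, hB1_def,
      ENNReal.ofReal_mul (show (0:ℝ) ≤ (sR^d)⁻¹ from inv_nonneg.2 (pow_nonneg hs0.le d)),
      ENNReal.ofReal_inv_of_pos (pow_pos hs0 d)]
  set VD := M^(d-1) * M * L^e with hVD_def
  have hVDpos : 0 < VD := by positivity
  set VE := (2*M)^(d-1) * 2 * 8^e with hVE_def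
  have hVEpos : 0 < VE := by positivity
  rw [hβeq, hvolD, hvolE, ENNReal.ofReal_rpow_of_pos hB1pos,
    ← ENNReal.ofReal_mul (Real.rpow_pos_of_pos hB1pos p).le, ENNReal.ofReal_rpow_of_pos
      (mul_pos (Real.rpow_pos_of_pos hB1pos p) hVDpos),
    ENNReal.ofReal_rpow_of_pos hVEpos] at hchain
  rcases le_or_gt A 0 with hA0 | hA0
  · exfalso
    have hz : ENNReal.ofReal A = 0 := ENNReal.ofReal_eq_zero.mpr hA0
    rw [hz, zero_mul, nonpos_iff_eq_zero, ENNReal.ofReal_eq_zero] at hchain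
    have : (0:ℝ) < (B1^p * VD)^(1/p) := Real.rpow_pos_of_pos
      (mul_pos (Real.rpow_pos_of_pos hB1pos p) hVDpos) _
    linarith
  · rw [← ENNReal.ofReal_mul hA0.le] at hchain
    have hreal : (B1^p * VD)^(1/p) ≤ A * VE^(1/p) :=
      (ENNReal.ofReal_le_ofReal_iff (by positivity)).1 hchain
    have hsplit : (B1^p * VD)^(1/p) = B1 * VD^(1/p) := by
      rw [Real.mul_rpow (by positivity) hVDpos.le, ← Real.rpow_mul hB1pos.le,
        mul_one_div, div_self hpne, Real.rpow_one]
    rw [hsplit] at hreal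
    set Q := (2:ℝ)^d * 32^e with hQ_def
    have hQ1 : (1:ℝ) ≤ Q := by
      rw [hQ_def]
      have h1 : (1:ℝ) ≤ 2^d := one_le_pow₀ (by norm_num)
      have h2 : (1:ℝ) ≤ 32^e := one_le_pow₀ (by norm_num)
      nlinarith
    have hQpos : (0:ℝ) < Q := by rw [hQ_def]; positivity
    have hVlb : VE * (M^(e+1) / Q) ≤ VD := by
      have hLe : (M/4)^e ≤ L^e := pow_le_pow_left₀ (by positivity) hLM4 e
      have heq : VE * (M^(e+1)/Q) = M^(d-1) * M * (M/4)^e := by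
        rw [hVE_def, hQ_def, mul_pow 2 M (d-1), div_pow,
          show (2:ℝ)^d = 2^(d-1)*2 by rw [← pow_succ]; congr 1; omega,
          show (32:ℝ)^e = 8^e * 4^e by rw [← mul_pow]; norm_num,
          pow_succ M e]
        have h1 : ((2:ℝ)^(d-1)) ≠ 0 := by positivity
        have h2 : ((8:ℝ)^e) ≠ 0 := by positivity
        have h3 : ((4:ℝ)^e) ≠ 0 := by positivity
        field_simp
      rw [heq, hVD_def]
      exact mul_le_mul_of_nonneg_left hLe (by positivity)
    have hVlb' : VE^(1/p) * (M^(e+1))^(1/p) * (Q^(1/p))⁻¹ ≤ VD^(1/p) := by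
      have h1 : (VE * (M^(e+1)/Q))^(1/p) ≤ VD^(1/p) :=
        Real.rpow_le_rpow (by positivity) hVlb (by positivity)
      rw [Real.mul_rpow (by positivity) (by positivity),
        Real.div_rpow (by positivity) hQpos.le,
        show (M^(e+1))^(1/p) / Q^(1/p) = (M^(e+1))^(1/p) * (Q^(1/p))⁻¹ from div_eq_mul_inv _ _,
        ← mul_assoc] at h1
      exact h1
    have hQinv : Q⁻¹ ≤ (Q^(1/p))⁻¹ := by
      have hle : Q^(1/p) ≤ Q := by
        calc Q^(1/p) ≤ Q^(1:ℝ) := Real.rpow_le_rpow_of_exponent_le hQ1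
              (by rw [div_le_one hp0]; linarith)
          _ = Q := Real.rpow_one Q
      exact inv_anti₀ (Real.rpow_pos_of_pos hQpos _) hle
    have hMp : (M^(e+1))^(1/p) = M ^ (((e:ℝ)+1)/p) := by
      rw [← Real.rpow_natCast M (e+1), ← Real.rpow_mul hM0.le]
      congr 1
      push_cast
      ring
    have hNα : (N:ℝ) ^ (((n:ℝ) - d + 1 - p) / (p * ((n:ℝ) - d))) = M ^ (((e:ℝ)+1)/p - 1) := by
      have hα : ((n:ℝ) - d + 1 - p) / (p * ((n:ℝ) - d)) = ((e:ℝ)+1-p)/(p*(e:ℝ)) := by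
        rw [hecast]
      rw [hα, ← hMe, ← Real.rpow_natCast M e, ← Real.rpow_mul hM0.le]
      congr 1
      field_simp
    have hfinal : ((4*(n:ℝ))^d * Q)⁻¹ * (N:ℝ)^(((n:ℝ) - d + 1 - p) / (p * ((n:ℝ) - d)))
        * VE^(1/p) ≤ B1 * VD^(1/p) := by
      have hstep : B1 * (VE^(1/p) * (M^(e+1))^(1/p) * (Q^(1/p))⁻¹) ≤ B1 * VD^(1/p) :=
        mul_le_mul_of_nonneg_left hVlb' hB1pos.le
      refine le_trans ?_ hstep
      rw [hMp, hNα]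
      have hB1eq : B1 = 2 * ((4*(n:ℝ))^d)⁻¹ * M⁻¹ := by
        rw [hB1_def, hsR_def, mul_pow (4*(n:ℝ)) M d,
          show M^d = M^(d-1) * M by rw [← pow_succ]; congr 1; omega]
        field_simp
      rw [hB1eq]
      have hMsplit : M ^ (((e:ℝ)+1)/p - 1) = M ^ (((e:ℝ)+1)/p) * M⁻¹ := by
        rw [Real.rpow_sub hM0, Real.rpow_one, div_eq_mul_inv]
      rw [hMsplit]
      have hQQ : ((4*(n:ℝ))^d * Q)⁻¹ ≤ 2 * ((4*(n:ℝ))^d)⁻¹ * (Q^(1/p))⁻¹ := by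
        rw [mul_inv]
        have h1 : ((4*(n:ℝ))^d)⁻¹ * Q⁻¹ ≤ ((4*(n:ℝ))^d)⁻¹ * (Q^(1/p))⁻¹ :=
          mul_le_mul_of_nonneg_left hQinv (by positivity)
        have h2 : (0:ℝ) ≤ ((4*(n:ℝ))^d)⁻¹ * (Q^(1/p))⁻¹ := by positivity
        calc ((4*(n:ℝ))^d)⁻¹ * Q⁻¹ ≤ ((4*(n:ℝ))^d)⁻¹ * (Q^(1/p))⁻¹ := h1
          _ ≤ 2 * (((4*(n:ℝ))^d)⁻¹ * (Q^(1/p))⁻¹) := by linarith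
          _ = 2 * ((4*(n:ℝ))^d)⁻¹ * (Q^(1/p))⁻¹ := by ring
      calc ((4*(n:ℝ))^d * Q)⁻¹ * (M^(((e:ℝ)+1)/p) * M⁻¹) * VE^(1/p)
          ≤ (2 * ((4*(n:ℝ))^d)⁻¹ * (Q^(1/p))⁻¹) * (M^(((e:ℝ)+1)/p) * M⁻¹) * VE^(1/p) := by
            apply mul_le_mul_of_nonneg_right
              (mul_le_mul_of_nonneg_right hQQ (by positivity)) (by positivity)
        _ = 2 * ((4*(n:ℝ))^d)⁻¹ * M⁻¹ * (VE^(1/p) * M^(((e:ℝ)+1)/p) * (Q^(1/p))⁻¹) := by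
            ring
    have hVEp : (0:ℝ) < VE^(1/p) := Real.rpow_pos_of_pos hVEpos _
    have hcomb := le_trans hfinal hreal
    have := le_of_mul_le_mul_right (by
      calc ((4*(n:ℝ))^d * Q)⁻¹ * (N:ℝ)^(((n:ℝ) - d + 1 - p) / (p * ((n:ℝ) - d))) * VE^(1/p)
          ≤ A * VE^(1/p) := hcomb) hVEp
    exact this
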